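/- arXiv:0904.1002 — 3 statements merged into one kernel-verified Lean document; each statement's English description precedes it below -/
import Mathlib

section
/- Define F(n) for n ≥ 0 by: if n = m(m+1)/2 + k with m ≥ 0 and 0 ≤ k ≤ m, then F(n) = m(m+1)(m+2)(3m+5)/24 + k(n+m-k+1) + k(k+1)/2. Then F satisfies F(0) = 0 and for all n ≥ 0, F(n+1) = F(n) + n + m' + 2, where m' is the unique integer with m'(m'+1)/2 ≤ n < (m'+1)(m'+2)/2. -/
/-! The closed form is `A m + k (T m + m + 1) + k (k + 1) / 2` with `T m = m (m + 1) / 2` and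
`A m = m (m + 1) (m + 2) (3 m + 5) / 24`. Inside a triangular block, raising `k` by one adds
`T m + m + 1 + (k + 1) = n + m + 2`. Crossing into block `m + 1` resets `k` from `m` to `0`, and the
loss is made up exactly by `A (m + 1) - A m = (m + 2) (T m + m + 1)`. -/

/-- The closed form value for `n = m (m+1)/2 + k`:
`F(n) = m(m+1)(m+2)(3m+5)/24 + k (n + m - k + 1) + k(k+1)/2`. -/
def Fval (m k : ℕ) : ℕ :=
  m * (m + 1) * (m + 2) * (3 * m + 5) / 24
    + k * (m * (m + 1) / 2 + k + m - k + 1) + k * (k + 1) / 2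

/-- The unique `m` with `m(m+1)/2 ≤ n < (m+1)(m+2)/2`. -/
def triIdx (n : ℕ) : ℕ := (Nat.sqrt (8 * n + 1) - 1) / 2

/-- `F n`, computed via the triangular decomposition of `n`. -/
def F (n : ℕ) : ℕ := Fval (triIdx n) (n - triIdx n * (triIdx n + 1) / 2)

lemma two_mul_tri (m : ℕ) : 2 * (m * (m + 1) / 2) = m * (m + 1) :=
  Nat.mul_div_cancel' (Nat.even_mul_succ_self m).two_dvd

lemma tri_succ (m : ℕ) : (m + 1) * (m + 2) / 2 = m * (m + 1) / 2 + (m + 1) := by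
  rw [show (m + 1) * (m + 2) = m * (m + 1) + (m + 1) * 2 by ring,
    Nat.add_mul_div_right _ _ two_pos]

lemma quartic_succ (m : ℕ) :
    (m + 1) * (m + 1 + 1) * (m + 1 + 2) * (3 * (m + 1) + 5) / 24
      = m * (m + 1) * (m + 2) * (3 * m + 5) / 24 + (m + 2) * (m * (m + 1) / 2 + m + 1) := by
  have h := two_mul_tri m
  rw [show (m + 1) * (m + 1 + 1) * (m + 1 + 2) * (3 * (m + 1) + 5)
      = m * (m + 1) * (m + 2) * (3 * m + 5) + 24 * ((m + 2) * (m * (m + 1) / 2 + m + 1)) by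
    linear_combination (12 * (m + 2)) * h.symm,
    Nat.add_mul_div_left _ _ (by norm_num)]

lemma Fval_eq (m k : ℕ) :
    Fval m k = m * (m + 1) * (m + 2) * (3 * m + 5) / 24
      + k * (m * (m + 1) / 2 + m + 1) + k * (k + 1) / 2 := by
  rw [Fval, Nat.add_right_comm _ k m, Nat.add_sub_cancel]

lemma Fval_succ (m k : ℕ) : Fval m (k + 1) = Fval m k + (m * (m + 1) / 2 + k) + m + 2 := by
  rw [Fval_eq, Fval_eq, tri_succ]
  ring

lemma Fval_succ_zero (m : ℕ) : Fval (m + 1) 0 = Fval m m + (m * (m + 1) / 2 + m) + m + 2 := by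
  rw [Fval_eq, Fval_eq, quartic_succ]
  ring

lemma triIdx_eq {n m : ℕ} (h₁ : m * (m + 1) / 2 ≤ n) (h₂ : n < (m + 1) * (m + 2) / 2) :
    triIdx n = m := by
  rw [tri_succ] at h₂
  have h := two_mul_tri m
  have hlo : (2 * m + 1) * (2 * m + 1) ≤ 8 * n + 1 := by nlinarith
  have hhi : 8 * n + 1 < (2 * m + 3) * (2 * m + 3) := by nlinarith
  have hsqrt_lo := Nat.le_sqrt.mpr hlo
  have hsqrt_hi := Nat.sqrt_lt.mpr hhi
  unfold triIdx
  omega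

lemma F_tri_add {m k : ℕ} (hk : k ≤ m) : F (m * (m + 1) / 2 + k) = Fval m k := by
  rw [F, triIdx_eq (Nat.le_add_right _ _) (by rw [tri_succ]; omega), Nat.add_sub_cancel_left]

/-- `F 0 = 0` and `F (n+1) = F n + n + m' + 2` where `m'` is the unique integer
with `m'(m'+1)/2 ≤ n < (m'+1)(m'+2)/2`. -/
theorem F_recurrence :
    F 0 = 0 ∧ ∀ n m' : ℕ, m' * (m' + 1) / 2 ≤ n → n < (m' + 1) * (m' + 2) / 2 →
      F (n + 1) = F n + n + m' + 2 := by
  refine ⟨rfl, fun n m h₁ h₂ => ?_⟩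
  obtain ⟨k, rfl⟩ := Nat.exists_eq_add_of_le h₁
  have hk : k ≤ m := by rw [tri_succ] at h₂; omega
  rw [F_tri_add hk, add_assoc]
  rcases hk.lt_or_eq with hlt | rfl
  · rw [F_tri_add hlt, Fval_succ]
  · have hnext := F_tri_add (m := k + 1) (Nat.zero_le _)
    rw [tri_succ, add_zero] at hnext
    rw [hnext, Fval_succ_zero]
end

section
/- Define optcost(n) as the minimum over all r ≥ 1 and all compositions (b_1,...,b_r) of n into positive parts of the quantity Σ_{i=1}^r b_i · (i + Σ_{j=1}^i b_j), with optcost(0) = 0. Then for n ≥ 1, optcost(n) = min_{1 ≤ b ≤ n} [ b·(1+b) + (n-b)·(1+b) + optcost(n-b) ]. -/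
/-- Cost of a list of batch sizes, where `i` batches have already been scheduled
and `t` jobs already processed: batch `b` completes at time `i + 1 + t + b`. -/
def batchCostAux : ℕ → ℕ → List ℕ → ℕ
  | _, _, [] => 0
  | i, t, b :: rest => b * (i + 1 + t + b) + batchCostAux (i + 1) (t + b) rest

/-- Total cost of a composition `l = (b_1, ..., b_r)`:  `Σ_i b_i (i + Σ_{j ≤ i} b_j)`. -/
def batchCost (l : List ℕ) : ℕ := batchCostAux 0 0 l

/-- Minimum sum of completion times for `n` unit jobs in the list 1-batch problem. -/
noncomputable def optcost (n : ℕ) : ℕ :=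
  sInf {c | ∃ l : List ℕ, (∀ b ∈ l, 0 < b) ∧ l.sum = n ∧ batchCost l = c}

lemma batchCostAux_shift (l : List ℕ) : ∀ i t : ℕ,
    batchCostAux i t l = batchCostAux 0 0 l + (i + t) * l.sum := by
  induction l with
  | nil => intro i t; simp [batchCostAux]
  | cons b rest ih =>
    intro i t
    simp only [batchCostAux, List.sum_cons]
    rw [ih (i+1) (t+b), ih (0+1) (0+b)]
    ring

lemma batchCost_cons (b : ℕ) (l : List ℕ) :
    batchCost (b :: l) = b * (1 + b) + l.sum * (1 + b) + batchCost l := by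
  simp only [batchCost, batchCostAux]
  rw [batchCostAux_shift l (0+1) (0+b)]
  ring

lemma optcost_mem (n : ℕ) : ∃ l : List ℕ, (∀ b ∈ l, 0 < b) ∧ l.sum = n ∧
    batchCost l = optcost n := by
  have h : ({c | ∃ l : List ℕ, (∀ b ∈ l, 0 < b) ∧ l.sum = n ∧ batchCost l = c} : Set ℕ).Nonempty := by
    rcases Nat.eq_zero_or_pos n with h | h
    · exact ⟨0, [], by simp [h, batchCost, batchCostAux]⟩
    · exact ⟨batchCost [n], [n], by simp [h]⟩
  exact Nat.sInf_mem h

lemma optcost_le {l : List ℕ} (hp : ∀ b ∈ l, 0 < b) :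
    optcost l.sum ≤ batchCost l :=
  Nat.sInf_le ⟨l, hp, rfl, rfl⟩

/-- `optcost 0 = 0`, and for `n ≥ 1`,
`optcost n = min_{1 ≤ b ≤ n} [ b(1+b) + (n-b)(1+b) + optcost (n-b) ]`. -/
theorem optcost_recurrence :
    optcost 0 = 0 ∧ ∀ n : ℕ, 1 ≤ n →
      optcost n = sInf {c | ∃ b : ℕ, 1 ≤ b ∧ b ≤ n ∧
        c = b * (1 + b) + (n - b) * (1 + b) + optcost (n - b)} := by
  have h0 : optcost 0 = 0 := by
    apply Nat.le_antisymm _ (Nat.zero_le _)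
    exact Nat.sInf_le ⟨[], by simp [batchCost, batchCostAux]⟩
  refine ⟨h0, fun n hn => ?_⟩
  apply Nat.le_antisymm
  · -- every element of the RHS set is in the LHS set, so sInf LHS ≤ it
    have hTne : ({c | ∃ b : ℕ, 1 ≤ b ∧ b ≤ n ∧
        c = b * (1 + b) + (n - b) * (1 + b) + optcost (n - b)} : Set ℕ).Nonempty :=
      ⟨n * (1 + n) + (n - n) * (1 + n) + optcost (n - n), n, hn, le_refl n, rfl⟩
    obtain ⟨b, hb1, hbn, hc⟩ := Nat.sInf_mem hTne
    obtain ⟨l, hp, hs, hcost⟩ := optcost_mem (n - b)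
    have key : batchCost (b :: l) = sInf {c | ∃ b : ℕ, 1 ≤ b ∧ b ≤ n ∧
        c = b * (1 + b) + (n - b) * (1 + b) + optcost (n - b)} := by
      rw [batchCost_cons, hs, hcost, ← hc]
    calc optcost n ≤ batchCost (b :: l) := by
          have hsum : (b :: l).sum = n := by
            simp [hs]; omega
          have := optcost_le (l := b :: l) (by
            intro x hx
            rcases List.mem_cons.mp hx with h | h
            · omega
            · exact hp x h)
          rwa [hsum] at this
      _ = _ := key
  · -- sInf RHS ≤ optcost n
    obtain ⟨l, hp, hs, hcost⟩ := optcost_mem n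
    match l, hs with
    | [], hs => simp at hs; omega
    | b :: rest, hs =>
      have hb : 0 < b := hp b (by simp)
      have hrest : ∀ x ∈ rest, 0 < x := fun x hx => hp x (by simp [hx])
      have hsum : b + rest.sum = n := by simpa using hs
      have h1 : rest.sum = n - b := by omega
      have h2 : optcost (n - b) ≤ batchCost rest := by
        rw [← h1]; exact optcost_le hrest
      calc sInf {c | ∃ b : ℕ, 1 ≤ b ∧ b ≤ n ∧
              c = b * (1 + b) + (n - b) * (1 + b) + optcost (n - b)}
          ≤ b * (1 + b) + (n - b) * (1 + b) + optcost (n - b) :=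
            Nat.sInf_le ⟨b, hb, by omega, rfl⟩
        _ ≤ batchCost (b :: rest) := by
            rw [batchCost_cons, h1]
            omega
        _ = optcost n := hcost
end

section
/- Pruning lemma: let A and B be two partial online batching strategies on the first n jobs whose most recent batch boundary is at the same position p ≤ n, with r_A ≤ r_B batches used and cost_A(n) ≤ cost_B(n). Then for every extension (continuation of batching decisions) of B to n' > n jobs, applying the same continuation to A yields cost_A(n') ≤ cost_B(n'). -/
/-! Under a common continuation both runs take the same decisions, so their last boundaries stay
equal and `A` never gets a larger batch index. Adding job `k + 1` raises the cost by the new batch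
index plus `k` plus the size of the open batch, so each cost increment of `A` is at most that of
`B`. -/

/-- State after the first `j` jobs for the online algorithm given by decisions `d`
(`d j = true` means job `j ≥ 2` starts a new batch): `(current batch index,
position of the most recent batch boundary, cost of all closed batches)`. -/
def ocSt (d : ℕ → Bool) : ℕ → ℕ × ℕ × ℕ
  | 0 => (1, 0, 0)
  | j + 1 =>
    let (r, s, a) := ocSt d j
    if j ≠ 0 ∧ d (j + 1) = true then (r + 1, j, a + (j - s) * (r + j)) else (r, s, a)

/-- Online cost of the first `n` jobs: cost of closed batches plus the cost of
the final (possibly open) batch, which completes at time `r + n`. -/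
def onlineCost (d : ℕ → Bool) (n : ℕ) : ℕ :=
  let (r, s, a) := ocSt d n
  a + (n - s) * (r + n)

lemma ocSt_succ (d : ℕ → Bool) (j : ℕ) :
    ocSt d (j + 1) = if j ≠ 0 ∧ d (j + 1) = true then
      ((ocSt d j).1 + 1, j, (ocSt d j).2.2 + (j - (ocSt d j).2.1) * ((ocSt d j).1 + j))
    else ocSt d j := by
  rw [ocSt]

lemma onlineCost_eq (d : ℕ → Bool) (n : ℕ) :
    onlineCost d n = (ocSt d n).2.2 + (n - (ocSt d n).2.1) * ((ocSt d n).1 + n) := by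
  rw [onlineCost]

lemma ocSt_boundary_le (d : ℕ → Bool) (j : ℕ) : (ocSt d j).2.1 ≤ j := by
  induction j with
  | zero => simp [ocSt]
  | succ j ih =>
    rw [ocSt_succ]
    split_ifs
    · exact Nat.le_succ j
    · omega

lemma onlineCost_succ (d : ℕ → Bool) (k : ℕ) :
    onlineCost d (k + 1) =
      onlineCost d k + (ocSt d (k + 1)).1 + k + (k + 1 - (ocSt d (k + 1)).2.1) := by
  have hs := ocSt_boundary_le d k
  rw [onlineCost_eq, onlineCost_eq, ocSt_succ]
  split_ifs
  · simp only [Nat.add_sub_cancel_left]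
    ring
  · have hs_succ : (ocSt d k).2.1 ≤ k + 1 := by omega
    zify [hs, hs_succ]
    ring

section Continuation

variable {dA dB : ℕ → Bool} {n : ℕ} (hcont : ∀ j : ℕ, n < j → dA j = dB j)
include hcont

lemma ocSt_boundary_eq_of_agree (hs : (ocSt dA n).2.1 = (ocSt dB n).2.1) {m : ℕ} (hm : n ≤ m) :
    (ocSt dA m).2.1 = (ocSt dB m).2.1 := by
  induction m, hm using Nat.le_induction with
  | base => exact hs
  | succ k hk ih =>
    rw [ocSt_succ, ocSt_succ, hcont (k + 1) (by omega)]
    split_ifs <;> simp [ih]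

lemma ocSt_index_le_of_agree (hr : (ocSt dA n).1 ≤ (ocSt dB n).1) {m : ℕ} (hm : n ≤ m) :
    (ocSt dA m).1 ≤ (ocSt dB m).1 := by
  induction m, hm using Nat.le_induction with
  | base => exact hr
  | succ k hk ih =>
    rw [ocSt_succ, ocSt_succ, hcont (k + 1) (by omega)]
    split_ifs <;> simp [ih]

end Continuation

theorem pruning_dominance_general (dA dB : ℕ → Bool) (n p : ℕ)
    (hsA : (ocSt dA n).2.1 = p) (hsB : (ocSt dB n).2.1 = p)
    (hr : (ocSt dA n).1 ≤ (ocSt dB n).1)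
    (hc : onlineCost dA n ≤ onlineCost dB n)
    (hcont : ∀ j : ℕ, n < j → dA j = dB j) :
    ∀ n' : ℕ, n ≤ n' → onlineCost dA n' ≤ onlineCost dB n' := by
  intro n' hn'
  induction n', hn' using Nat.le_induction with
  | base => exact hc
  | succ k hk ih =>
    have hk' : n ≤ k + 1 := by omega
    have hs := ocSt_boundary_eq_of_agree hcont (hsA.trans hsB.symm) hk'
    have hri := ocSt_index_le_of_agree hcont hr hk'
    rw [onlineCost_succ dA, onlineCost_succ dB, hs]
    omega

/-- Pruning lemma: if two partial strategies have the same most recent batch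
boundary `p ≤ n`, `A` uses at most as many batches as `B`, and `A`'s cost is at
most `B`'s cost, then under any common continuation `A`'s cost stays at most
`B`'s cost. -/
theorem pruning_dominance (dA dB : ℕ → Bool) (n p : ℕ) (hpn : p ≤ n)
    (hsA : (ocSt dA n).2.1 = p) (hsB : (ocSt dB n).2.1 = p)
    (hr : (ocSt dA n).1 ≤ (ocSt dB n).1)
    (hc : onlineCost dA n ≤ onlineCost dB n)
    (hcont : ∀ j : ℕ, n < j → dA j = dB j) :
    ∀ n' : ℕ, n ≤ n' → onlineCost dA n' ≤ onlineCost dB n' :=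
  pruning_dominance_general dA dB n p hsA hsB hr hc hcont
end
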